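/- arXiv:math/0405515 — 6 statements merged into one kernel-verified Lean document; each statement's English description precedes it below -/
import Mathlib

section
/- Let Q ⊆ 𝔞⁺ be a closed convex cone with vertex at the origin that contains the barycenter v in its interior, and let C > 0. Define Q_T(C) = {t ∈ Q : ‖t‖ < T and α(t) ≥ C for all α ∈ Φ⁺}. Then ∫_{Q_T(C)} ξ(t) dt ∼ ∫_{(𝔞⁺)_T} ξ(t) dt as T → ∞ (i.e., the ratio of the two integrals tends to 1). (Paper's Lemma 5.3 in coordinate form.) -/
/-!
Put `L = 2ρ`, so `ξ ≤ exp L` on `𝔞⁺`. A point of `(𝔞⁺)_T` missed by `Q_T(C)` lies outside `Q` or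
has a root `α(t) < C`. Since `v` is the unique maximiser of `L` on the unit ball and lies in the
interior of `Q`, compactness of the unit ball inside the closed cones `(int Q)ᶜ` and `𝔞⁺` gives
`a < δ` with `L ≤ a‖t‖` on the first and `L - m_α α ≤ a‖t‖` on the second; so `L ≤ a‖t‖ + κ` on
the missed points and they contribute `O(T^r e^{aT})`. Conversely `ξ ≍ e^L` on a ball of fixed
radius around `(T - 1)v`, where `L ≥ δ'(T - 1)`, so `∫_{(𝔞⁺)_T} ξ ≳ e^{δ'T}` for any `δ' < δ`.
-/

open MeasureTheory Real Filter Set Topology Metric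
open scoped Pointwise

lemma tendsto_div_of_norm_sub_le_mul_exp {F G : ℝ → ℝ} {n : ℕ} {a b A c : ℝ} (hab : a < b)
    (hc : 0 < c) (hG : ∀ᶠ T in atTop, c * exp (b * T) ≤ G T)
    (hFG : ∀ᶠ T in atTop, ‖G T - F T‖ ≤ A * T ^ n * exp (a * T)) :
    Tendsto (fun T => F T / G T) atTop (𝓝 1) := by
  have hdecay : Tendsto (fun T : ℝ => A / c * (T ^ n * exp (-(b - a) * T))) atTop (𝓝 0) := by
    simpa [rpow_natCast] using
      (tendsto_rpow_mul_exp_neg_mul_atTop_nhds_zero n (b - a) (by linarith)).const_mul (A / c)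
  have hrel : Tendsto (fun T => (G T - F T) / G T) atTop (𝓝 0) := by
    refine squeeze_zero_norm' ?_ hdecay
    filter_upwards [hG, hFG] with T hGT hFGT
    have hcexp : 0 < c * exp (b * T) := by positivity
    rw [norm_div, norm_of_nonneg (hcexp.le.trans hGT)]
    calc ‖G T - F T‖ / G T ≤ A * T ^ n * exp (a * T) / (c * exp (b * T)) :=
          div_le_div₀ ((norm_nonneg _).trans hFGT) hFGT hcexp hGT
      _ = A / c * (T ^ n * exp (-(b - a) * T)) := by
          rw [show -(b - a) * T = a * T - b * T by ring, exp_sub]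
          field_simp
  have hlim : Tendsto (fun T => 1 - (G T - F T) / G T) atTop (𝓝 1) := by
    simpa using tendsto_const_nhds.sub hrel
  refine hlim.congr' ?_
  filter_upwards [hG] with T hGT
  have : G T ≠ 0 := ((by positivity : 0 < c * exp (b * T)).trans_le hGT).ne'
  field_simp
  ring

lemma Real.sinh_le_exp (x : ℝ) : sinh x ≤ exp x := by
  rw [sinh_eq]; linarith [exp_pos (-x), exp_pos x]

lemma Real.mul_exp_le_sinh {c x : ℝ} (hcx : c ≤ x) :
    (1 - exp (-(2 * c))) / 2 * exp x ≤ sinh x := by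
  have : exp (-x) ≤ exp (-(2 * c)) * exp x := by rw [← exp_add]; gcongr; linarith
  rw [sinh_eq]; linarith

section Cone

variable {E : Type*} [NormedAddCommGroup E] [NormedSpace ℝ E]

lemma LinearMap.pos_of_mem_interior {f : E →ₗ[ℝ] ℝ} (hf : f ≠ 0) {s : Set E}
    (hs : s ⊆ {x | 0 ≤ f x}) {v : E} (hv : v ∈ interior s) : 0 < f v := by
  have hopen := f.isOpenMap_of_finiteDimensional (LinearMap.surjective_of_ne_zero hf)
  simpa using hopen.interior_preimage_subset_preimage_interior (s := Ici 0) (interior_mono hs hv)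

lemma smul_notMem_interior_of_cone {Q : Set E} (hQ : ∀ c : ℝ, 0 < c → ∀ x ∈ Q, c • x ∈ Q)
    {c : ℝ} (hc : 0 < c) {x : E} (hx : x ∉ interior Q) : c • x ∉ interior Q := by
  intro hcx
  have : c⁻¹ • interior Q ⊆ interior Q := by
    rw [← interior_smul₀ (inv_ne_zero hc.ne')]
    exact interior_mono (smul_set_subset_iff.2 fun y hy => hQ _ (inv_pos.2 hc) y hy)
  exact hx (this ⟨_, hcx, by simp [smul_smul, hc.ne']⟩)

lemma exists_lt_forall_le_mul_norm [FiniteDimensional ℝ E] {S : Set E} (hS : IsClosed S)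
    (hcone : ∀ c : ℝ, 0 < c → ∀ x ∈ S, c • x ∈ S) (f : E →ₗ[ℝ] ℝ) {δ : ℝ} (hδ : 0 < δ)
    (hf : ∀ x ∈ S, ‖x‖ ≤ 1 → f x < δ) :
    ∃ d, 0 ≤ d ∧ d < δ ∧ ∀ x ∈ S, f x ≤ d * ‖x‖ := by
  obtain ⟨d, hdδ, hd⟩ : ∃ d : ℝ, d < δ ∧ ∀ x ∈ S ∩ closedBall 0 1, f x ≤ d :=
    ((isCompact_closedBall (0 : E) 1).inter_left hS).exists_forall_le' (α := ℝᵒᵈ)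
      f.continuous_of_finiteDimensional.continuousOn fun x hx => hf x hx.1 (by simpa using hx.2)
  refine ⟨max d 0, le_max_right _ _, max_lt hdδ hδ, fun x hx => ?_⟩
  rcases eq_or_ne x 0 with rfl | hx0
  · simp
  have hpos : 0 < ‖x‖ := norm_pos_iff.2 hx0
  have hu : f (‖x‖⁻¹ • x) ≤ d :=
    hd _ ⟨hcone _ (inv_pos.2 hpos) x hx, by simp [norm_smul, hpos.ne']⟩
  calc f x = f (‖x‖⁻¹ • x) * ‖x‖ := by
        rw [map_smul, smul_eq_mul, mul_comm, mul_inv_cancel_left₀ hpos.ne']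
    _ ≤ max d 0 * ‖x‖ := by gcongr; exact hu.trans (le_max_left _ _)

end Cone

section RootData

variable {E : Type*} [NormedAddCommGroup E] [NormedSpace ℝ E] {ι : Type*}
  (α : ι → E →ₗ[ℝ] ℝ) (m : ι → ℕ)

def chamber : Set E := {t | ∀ i, 0 ≤ α i t}

variable {α} in
lemma smul_mem_chamber {c : ℝ} (hc : 0 ≤ c) {t : E} (ht : t ∈ chamber α) : c • t ∈ chamber α :=
  fun i => by simpa using mul_nonneg hc (ht i)

variable {α} in
lemma isClosed_setOf_forall_le [FiniteDimensional ℝ E] (C : ℝ) :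
    IsClosed {t | ∀ i, C ≤ α i t} := by
  simp only [ofPred_forall]
  exact isClosed_iInter fun i => isClosed_le continuous_const (α i).continuous_of_finiteDimensional

variable [Fintype ι]

def twoRho : E →ₗ[ℝ] ℝ := ∑ i, (m i : ℝ) • α i

noncomputable def sinhDensity (t : E) : ℝ := ∏ i, sinh (α i t) ^ m i

variable {α m}

lemma twoRho_apply (t : E) : twoRho α m t = ∑ i, (m i : ℝ) * α i t := by
  simp [twoRho]

lemma continuous_sinhDensity [FiniteDimensional ℝ E] : Continuous (sinhDensity α m) :=
  continuous_finsetProd _ fun i _ =>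
    (continuous_sinh.comp (α i).continuous_of_finiteDimensional).pow _

lemma sinhDensity_nonneg {t : E} (ht : t ∈ chamber α) : 0 ≤ sinhDensity α m t :=
  Finset.prod_nonneg fun i _ => pow_nonneg (sinh_nonneg_iff.2 (ht i)) _

lemma sinhDensity_le_exp_twoRho {t : E} (ht : t ∈ chamber α) :
    sinhDensity α m t ≤ exp (twoRho α m t) := by
  rw [twoRho_apply, exp_sum]
  refine Finset.prod_le_prod (fun i _ => pow_nonneg (sinh_nonneg_iff.2 (ht i)) _) fun i _ => ?_
  rw [exp_nat_mul]
  exact pow_le_pow_left₀ (sinh_nonneg_iff.2 (ht i)) (sinh_le_exp _) _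

lemma mul_exp_twoRho_le_sinhDensity {c : ι → ℝ} (hc : ∀ i, 0 ≤ c i) {t : E}
    (ht : ∀ i, c i ≤ α i t) :
    (∏ i, ((1 - exp (-(2 * c i))) / 2) ^ m i) * exp (twoRho α m t) ≤ sinhDensity α m t := by
  have hβ : ∀ i, 0 ≤ (1 - exp (-(2 * c i))) / 2 := fun i => by
    have : exp (-(2 * c i)) ≤ 1 := exp_le_one_iff.2 (by linarith [hc i])
    linarith
  rw [twoRho_apply, exp_sum, ← Finset.prod_mul_distrib]
  refine Finset.prod_le_prod (fun i _ => mul_nonneg (pow_nonneg (hβ i) _) (exp_pos _).le)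
    fun i _ => ?_
  rw [exp_nat_mul, ← mul_pow]
  exact pow_le_pow_left₀ (mul_nonneg (hβ i) (exp_pos _).le) (mul_exp_le_sinh (ht i)) _

lemma twoRho_pos [Nonempty ι] (hm : ∀ i, 0 < m i) {v : E} (hv : ∀ i, 0 < α i v) :
    0 < twoRho α m v := by
  rw [twoRho_apply]
  exact Finset.sum_pos (fun i _ => mul_pos (Nat.cast_pos.2 (hm i)) (hv i)) Finset.univ_nonempty

end RootData

section Asymptotics

variable {E : Type*} [NormedAddCommGroup E] [NormedSpace ℝ E] [FiniteDimensional ℝ E]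
  {ι : Type*} [Fintype ι] {α : ι → E →ₗ[ℝ] ℝ} {m : ι → ℕ} {v : E}

lemma exists_twoRho_le_of_notMem_interior {Q : Set E}
    (hQ : ∀ c : ℝ, 0 < c → ∀ x ∈ Q, c • x ∈ Q) (hvQ : v ∈ interior Q)
    (hv : ∀ t : E, ‖t‖ ≤ 1 → t ≠ v → twoRho α m t < twoRho α m v) (hpos : 0 < twoRho α m v) :
    ∃ d, 0 ≤ d ∧ d < twoRho α m v ∧ ∀ t ∉ interior Q, twoRho α m t ≤ d * ‖t‖ :=
  exists_lt_forall_le_mul_norm isOpen_interior.isClosed_compl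
    (fun _ hc _ hx => smul_notMem_interior_of_cone hQ hc hx) _ hpos
    fun t ht ht1 => hv t ht1 fun h => ht (h ▸ hvQ)

lemma exists_twoRho_sub_le (hm : ∀ i, 0 < m i) (hαv : ∀ i, 0 < α i v)
    (hv : ∀ t : E, ‖t‖ ≤ 1 → t ≠ v → twoRho α m t < twoRho α m v) (hpos : 0 < twoRho α m v)
    (i : ι) : ∃ d < twoRho α m v, ∀ t ∈ chamber α, twoRho α m t - m i * α i t ≤ d * ‖t‖ := by
  obtain ⟨d, -, hdv, hd⟩ := exists_lt_forall_le_mul_norm (isClosed_setOf_forall_le 0)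
    (fun c hc t ht => smul_mem_chamber hc.le ht) (twoRho α m - (m i : ℝ) • α i) hpos
    fun t ht ht1 => by
      have hmi : 0 ≤ (m i : ℝ) * α i t := mul_nonneg (Nat.cast_nonneg _) (ht i)
      rcases eq_or_ne t v with rfl | htv
      · have : 0 < (m i : ℝ) * α i t := mul_pos (Nat.cast_pos.2 (hm i)) (hαv i)
        simp only [LinearMap.sub_apply, LinearMap.smul_apply, smul_eq_mul]
        linarith
      · simp only [LinearMap.sub_apply, LinearMap.smul_apply, smul_eq_mul]
        linarith [hv t ht1 htv]
  exact ⟨d, hdv, fun t ht => by simpa using hd t ht⟩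

lemma exists_twoRho_le_of_notMem_truncatedCone [Nonempty ι] (hm : ∀ i, 0 < m i)
    (hαv : ∀ i, 0 < α i v) (hv : ∀ t : E, ‖t‖ ≤ 1 → t ≠ v → twoRho α m t < twoRho α m v)
    {Q : Set E} (hQ : ∀ c : ℝ, 0 < c → ∀ x ∈ Q, c • x ∈ Q) (hvQ : v ∈ interior Q) (C : ℝ) :
    ∃ a, 0 ≤ a ∧ a < twoRho α m v ∧ ∃ κ, ∀ t ∈ chamber α, (t ∉ Q ∨ ∃ i, α i t < C) →
      twoRho α m t ≤ a * ‖t‖ + κ := by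
  have hpos := twoRho_pos hm hαv
  obtain ⟨dQ, hdQ0, hdQv, hQbound⟩ := exists_twoRho_le_of_notMem_interior hQ hvQ hv hpos
  choose d hdv hbound using exists_twoRho_sub_le hm hαv hv hpos
  set a := max dQ (Finset.univ.sup' Finset.univ_nonempty d)
  set κ := ∑ i, (m i : ℝ) * |C|
  refine ⟨a, hdQ0.trans (le_max_left _ _), max_lt hdQv ((Finset.sup'_lt_iff _).2 fun i _ => hdv i),
    κ, fun t ht hbad => ?_⟩
  rcases hbad with htQ | ⟨i, hiC⟩
  · have hκ : 0 ≤ κ := by positivity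
    calc twoRho α m t ≤ dQ * ‖t‖ := hQbound t fun h => htQ (interior_subset h)
      _ ≤ a * ‖t‖ + κ := by
          have := mul_le_mul_of_nonneg_right (le_max_left _ _ : dQ ≤ a) (norm_nonneg t)
          linarith
  · calc twoRho α m t = (twoRho α m t - m i * α i t) + m i * α i t := by ring
      _ ≤ d i * ‖t‖ + m i * |C| := by
          gcongr
          · exact hbound i t ht
          · exact hiC.le.trans (le_abs_self C)
      _ ≤ a * ‖t‖ + κ := by
          gcongr
          · exact (Finset.le_sup' d (Finset.mem_univ i)).trans (le_max_right _ _)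
          · exact Finset.single_le_sum (f := fun j => (m j : ℝ) * |C|)
              (fun j _ => by positivity) (Finset.mem_univ i)

lemma exists_forall_mem_ball_near_ray (hv1 : ‖v‖ ≤ 1) (hαv : ∀ i, 0 < α i v) {δ' : ℝ}
    (hδ' : δ' < twoRho α m v) :
    ∃ ρ > 0, ∀ s ≥ (1 : ℝ), ∀ t ∈ ball (s • v) ρ,
      (∀ i, α i v / 2 ≤ α i t) ∧ δ' * s ≤ twoRho α m t ∧ ‖t‖ < s + 1 := by
  have hnear : ∀ᶠ w in 𝓝 v, ((∀ i, α i v / 2 < α i w) ∧ δ' < twoRho α m w) ∧ w ∈ ball v 1 :=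
    ((eventually_all.2 fun i => ((α i).continuous_of_finiteDimensional.tendsto v).eventually
      (lt_mem_nhds (half_lt_self (hαv i)))).and
      (((twoRho α m).continuous_of_finiteDimensional.tendsto v).eventually (lt_mem_nhds hδ'))).and
      (ball_mem_nhds v one_pos)
  obtain ⟨ρ, hρ, hball⟩ := eventually_nhds_iff_ball.1 hnear
  refine ⟨ρ, hρ, fun s hs t ht => ?_⟩
  have hw : t - (s - 1) • v ∈ ball v ρ := by
    rw [mem_ball_iff_norm] at ht ⊢
    convert ht using 2
    module
  obtain ⟨⟨hαw, hLw⟩, hw1⟩ := hball _ hw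
  have ht_eq : t = (s - 1) • v + (t - (s - 1) • v) := by abel
  have hs0 : 0 ≤ s - 1 := by linarith
  refine ⟨fun i => ?_, ?_, ?_⟩
  · rw [ht_eq, map_add, map_smul, smul_eq_mul]
    nlinarith [hαw i, hαv i]
  · rw [ht_eq, map_add, map_smul, smul_eq_mul]
    nlinarith
  · rw [mem_ball_iff_norm] at hw1
    calc ‖t‖ ≤ ‖s • v‖ + ‖t - s • v‖ := norm_le_norm_add_norm_sub' _ _
      _ < s * 1 + 1 := by
        rw [norm_smul, norm_of_nonneg (by linarith)]
        have : t - (s - 1) • v - v = t - s • v := by module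
        rw [this] at hw1
        exact add_lt_add_of_le_of_lt (mul_le_mul_of_nonneg_left hv1 (by linarith)) hw1
      _ = s + 1 := by ring

variable [MeasurableSpace E] [BorelSpace E] (μ : Measure E) [μ.IsAddHaarMeasure]

lemma integrableOn_sinhDensity_of_subset_ball {s : Set E} {x : E} {r : ℝ} (hs : s ⊆ ball x r) :
    IntegrableOn (sinhDensity α m) s μ :=
  (continuous_sinhDensity.continuousOn.integrableOn_compact (isCompact_closedBall x r)).mono_set
    (hs.trans ball_subset_closedBall)

lemma integrableOn_sinhDensity_truncated (T : ℝ) :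
    IntegrableOn (sinhDensity α m) {t ∈ chamber α | ‖t‖ < T} μ :=
  integrableOn_sinhDensity_of_subset_ball μ (x := 0) fun _ ht => mem_ball_zero_iff.2 ht.2

lemma exists_mul_exp_le_setIntegral_sinhDensity (hv1 : ‖v‖ ≤ 1) (hαv : ∀ i, 0 < α i v)
    {δ' : ℝ} (hδ' : δ' < twoRho α m v) :
    ∃ c > 0, ∀ T ≥ (2 : ℝ),
      c * exp (δ' * T) ≤ ∫ t in {t ∈ chamber α | ‖t‖ < T}, sinhDensity α m t ∂μ := by
  obtain ⟨ρ, hρ, hnear⟩ := exists_forall_mem_ball_near_ray hv1 hαv hδ'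
  set β := ∏ i, ((1 - exp (-(2 * (α i v / 2)))) / 2) ^ m i
  have hβ : 0 < β := Finset.prod_pos fun i _ => pow_pos (by
    have : exp (-(2 * (α i v / 2))) < 1 := exp_lt_one_iff.2 (by linarith [hαv i])
    linarith) _
  have hball : 0 < μ.real (ball 0 ρ) :=
    ENNReal.toReal_pos (measure_ball_pos μ 0 hρ).ne' measure_ball_lt_top.ne
  refine ⟨β * exp (-δ') * μ.real (ball 0 ρ), by positivity, fun T hT => ?_⟩
  have hsub : ball ((T - 1) • v) ρ ⊆ {t ∈ chamber α | ‖t‖ < T} := fun t ht => by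
    obtain ⟨hαt, -, hnorm⟩ := hnear (T - 1) (by linarith) t ht
    exact ⟨fun i => (half_pos (hαv i)).le.trans (hαt i), by linarith⟩
  calc β * exp (-δ') * μ.real (ball 0 ρ) * exp (δ' * T)
      = β * exp (δ' * (T - 1)) * μ.real (ball ((T - 1) • v) ρ) := by
        rw [Measure.addHaar_real_ball_center μ ((T - 1) • v),
          show δ' * (T - 1) = -δ' + δ' * T by ring, exp_add]
        ring
    _ ≤ ∫ t in ball ((T - 1) • v) ρ, sinhDensity α m t ∂μ := by
        refine setIntegral_ge_of_const_le_real measurableSet_ball measure_ball_lt_top.ne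
          (fun t ht => ?_) (integrableOn_sinhDensity_of_subset_ball μ subset_rfl)
        obtain ⟨hαt, hLt, -⟩ := hnear (T - 1) (by linarith) t ht
        calc β * exp (δ' * (T - 1)) ≤ β * exp (twoRho α m t) := by gcongr
          _ ≤ sinhDensity α m t :=
            mul_exp_twoRho_le_sinhDensity (fun i => (half_pos (hαv i)).le) hαt
    _ ≤ ∫ t in {t ∈ chamber α | ‖t‖ < T}, sinhDensity α m t ∂μ :=
        setIntegral_mono_set (integrableOn_sinhDensity_truncated μ T)
          (ae_restrict_of_forall_mem ((isClosed_setOf_forall_le 0).measurableSet.inter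
            (measurableSet_lt measurable_norm measurable_const))
            fun t ht => sinhDensity_nonneg ht.1) hsub.eventuallyLE

lemma norm_setIntegral_sinhDensity_le {S : Set E} {a κ T : ℝ} (ha : 0 ≤ a) (hT : 0 < T)
    (hS : S ⊆ {t ∈ chamber α | ‖t‖ < T}) (hbound : ∀ t ∈ S, twoRho α m t ≤ a * ‖t‖ + κ) :
    ‖∫ t in S, sinhDensity α m t ∂μ‖ ≤
      exp κ * μ.real (ball 0 1) * T ^ Module.finrank ℝ E * exp (a * T) := by
  have hSball : S ⊆ ball 0 T := fun t ht => mem_ball_zero_iff.2 (hS ht).2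
  calc ‖∫ t in S, sinhDensity α m t ∂μ‖ ≤ exp (a * T + κ) * μ.real S := by
        refine norm_setIntegral_le_of_norm_le_const
          ((measure_mono hSball).trans_lt (measure_ball_lt_top (μ := μ))) fun t ht => ?_
        obtain ⟨htc, htT⟩ := hS ht
        rw [norm_of_nonneg (sinhDensity_nonneg htc)]
        calc sinhDensity α m t ≤ exp (twoRho α m t) := sinhDensity_le_exp_twoRho htc
          _ ≤ exp (a * T + κ) := by
            gcongr
            linarith [hbound t ht, mul_le_mul_of_nonneg_left htT.le ha]
    _ ≤ exp (a * T + κ) * μ.real (ball 0 T) :=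
        mul_le_mul_of_nonneg_left (measureReal_mono hSball (measure_ball_lt_top (μ := μ)).ne)
          (exp_pos _).le
    _ = _ := by
        simp only [measureReal_def, Measure.addHaar_ball_of_pos μ _ hT, ENNReal.toReal_mul,
          ENNReal.toReal_ofReal (pow_nonneg hT.le _), exp_add]
        ring

end Asymptotics

theorem cone_truncation_asymptotics_general
    (r : ℕ)
    (ι : Type) [Fintype ι] [Nonempty ι]
    (α : ι → (EuclideanSpace ℝ (Fin r) →ₗ[ℝ] ℝ))
    (hα : ∀ i, α i ≠ 0)
    (m : ι → ℕ) (hm : ∀ i, 1 ≤ m i)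
    (aPos : Set (EuclideanSpace ℝ (Fin r)))
    (haPos : aPos = {t | ∀ i, 0 ≤ α i t})
    (ξ : EuclideanSpace ℝ (Fin r) → ℝ)
    (hξ : ∀ t, ξ t = ∏ i, Real.sinh (α i t) ^ m i)
    (δ : ℝ) (v : EuclideanSpace ℝ (Fin r))
    (hv_norm : ‖v‖ ≤ 1)
    (hδ : δ = ∑ i, (m i : ℝ) * α i v)
    (hmax : ∀ t : EuclideanSpace ℝ (Fin r), ‖t‖ ≤ 1 → ∑ i, (m i : ℝ) * α i t ≤ δ)
    (huniq : ∀ t : EuclideanSpace ℝ (Fin r), ‖t‖ ≤ 1 →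
      (∑ i, (m i : ℝ) * α i t) = δ → t = v)
    (hv_int : v ∈ interior aPos)
    (Q : Set (EuclideanSpace ℝ (Fin r)))
    (hQclosed : IsClosed Q)
    (hQcone : ∀ c : ℝ, 0 ≤ c → ∀ x ∈ Q, c • x ∈ Q)
    (hQsub : Q ⊆ aPos) (hvQ : v ∈ interior Q)
    (C : ℝ) :
    Tendsto (fun T : ℝ =>
        (∫ t in {t ∈ Q | ‖t‖ < T ∧ ∀ i, C ≤ α i t}, ξ t) /
          (∫ t in {t ∈ aPos | ‖t‖ < T}, ξ t))
      atTop (nhds 1) := by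
  obtain rfl : aPos = chamber α := haPos
  obtain rfl : ξ = sinhDensity α m := funext hξ
  simp only [← twoRho_apply] at hδ hmax huniq
  subst hδ
  have hαv : ∀ i, 0 < α i v := fun i =>
    (α i).pos_of_mem_interior (hα i) (s := chamber α) (fun t ht => ht i) hv_int
  have hstrict : ∀ t, ‖t‖ ≤ 1 → t ≠ v → twoRho α m t < twoRho α m v := fun t ht htv =>
    (hmax t ht).lt_of_ne fun h => htv (huniq t ht h)
  obtain ⟨a, ha0, hav, κ, hbad⟩ := exists_twoRho_le_of_notMem_truncatedCone hm hαv hstrict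
    (fun c hc => hQcone c hc.le) hvQ C
  obtain ⟨c, hc, hlow⟩ :=
    exists_mul_exp_le_setIntegral_sinhDensity volume hv_norm hαv (add_div_two_lt_right.2 hav)
  apply tendsto_div_of_norm_sub_le_mul_exp (left_lt_add_div_two.2 hav) hc
    ((eventually_ge_atTop 2).mono hlow)
  filter_upwards [eventually_gt_atTop 0] with T hT
  have hgood : MeasurableSet {t ∈ Q | ‖t‖ < T ∧ ∀ i, C ≤ α i t} :=
    hQclosed.measurableSet.inter ((measurableSet_lt measurable_norm measurable_const).inter
      (isClosed_setOf_forall_le C).measurableSet)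
  rw [← setIntegral_sdiff hgood (integrableOn_sinhDensity_truncated volume T)
    fun t ht => ⟨hQsub ht.1, ht.2.1⟩]
  refine norm_setIntegral_sinhDensity_le volume ha0 hT sdiff_subset fun t ht => hbad t ht.1.1 ?_
  by_contra! h
  exact ht.2 ⟨h.1, ht.1.2, h.2⟩

/-- **Paper's Lemma 5.3 (coordinate form).**
Setup as in Lemma 5.1: `Φ⁺` is a finite nonempty family of nonzero linear functionals `α i`
on `ℝ^r` with multiplicities `m i ≥ 1`; `𝔞⁺ = {t | ∀ i, α i t ≥ 0}` has nonempty interior;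
`ξ t = ∏ i, sinh (α i t) ^ (m i)`; `δ = max {∑ i, m i * α i t : ‖t‖ ≤ 1}` is attained at the
unique point `v` (the barycenter), lying in the interior of `𝔞⁺`.  Let `Q ⊆ 𝔞⁺` be a closed
convex cone with vertex at the origin containing `v` in its interior, and let `C > 0`.  With
`Q_T(C) = {t ∈ Q : ‖t‖ < T ∧ ∀ i, α i t ≥ C}`, we have
`∫_{Q_T(C)} ξ ∼ ∫_{(𝔞⁺)_T} ξ` as `T → ∞`. -/
theorem cone_truncation_asymptotics
    (r : ℕ) (hr : 1 ≤ r)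
    (ι : Type) [Fintype ι] [Nonempty ι]
    (α : ι → (EuclideanSpace ℝ (Fin r) →ₗ[ℝ] ℝ))
    (hα : ∀ i, α i ≠ 0)
    (m : ι → ℕ) (hm : ∀ i, 1 ≤ m i)
    (aPos : Set (EuclideanSpace ℝ (Fin r)))
    (haPos : aPos = {t | ∀ i, 0 ≤ α i t})
    (haPosInt : (interior aPos).Nonempty)
    (ξ : EuclideanSpace ℝ (Fin r) → ℝ)
    (hξ : ∀ t, ξ t = ∏ i, Real.sinh (α i t) ^ m i)
    (δ : ℝ) (v : EuclideanSpace ℝ (Fin r))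
    (hv_norm : ‖v‖ ≤ 1)
    (hδ : δ = ∑ i, (m i : ℝ) * α i v)
    (hmax : ∀ t : EuclideanSpace ℝ (Fin r), ‖t‖ ≤ 1 → ∑ i, (m i : ℝ) * α i t ≤ δ)
    (huniq : ∀ t : EuclideanSpace ℝ (Fin r), ‖t‖ ≤ 1 →
      (∑ i, (m i : ℝ) * α i t) = δ → t = v)
    (hv_int : v ∈ interior aPos)
    (Q : Set (EuclideanSpace ℝ (Fin r)))
    (hQclosed : IsClosed Q) (hQconvex : Convex ℝ Q)
    (hQcone : ∀ c : ℝ, 0 ≤ c → ∀ x ∈ Q, c • x ∈ Q)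
    (hQsub : Q ⊆ aPos) (hvQ : v ∈ interior Q)
    (C : ℝ) (hC : 0 < C) :
    Tendsto (fun T : ℝ =>
        (∫ t in {t ∈ Q | ‖t‖ < T ∧ ∀ i, C ≤ α i t}, ξ t) /
          (∫ t in {t ∈ aPos | ‖t‖ < T}, ξ t))
      atTop (nhds 1) :=
  cone_truncation_asymptotics_general r ι α hα m hm aPos haPos ξ hξ δ v hv_norm hδ hmax huniq hv_int
    Q hQclosed hQcone hQsub hvQ C
end

section
/- Let μ be a locally finite Borel measure on [0, ∞), let δ > 0, c₁ > 0, and let r ≥ 1 be an integer, and suppose that μ([0, T)) ∼ c₁ · T^{(r−1)/2} · e^{δT} as T → ∞. Then for every s > δ the integral ∫_{[0,∞)} e^{−sT} dμ(T) is finite, and ∫_{[0,∞)} e^{−sT} dμ(T) ∼ c₁ · δ · Γ((r+1)/2) · (s − δ)^{−(r+1)/2} as s → δ⁺. (Abstract form of the asymptotic (eq_diverge) for the Dirichlet series ∑_{γ∈Γ} e^{−s·d(x,yγ)}, derived in Section 9 of the paper.) -/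
/-!
Writing `e^{-sT} = ∫_T^∞ s e^{-st} dt` and applying Tonelli gives
`∫ e^{-sT} dμ(T) = s ∫_0^∞ e^{-st} μ([0, t)) dt`. With `a = (r - 1) / 2` and
`g(t) = e^{-δt} μ([0, t)) ∼ c₁ t^a`, this is `s` times the Laplace transform of `g` at
`u = s - δ`. The Abelian theorem `u^(a+1) ∫_0^∞ e^{-ut} g(t) dt → c₁ Γ(a + 1)` as `u → 0⁺`
follows from the substitution `t = x / u` and dominated convergence, the dominating function
`C e^{-x} (1 + x^a)` coming from the bound `|g t| ≤ C (1 + t^a)` that the asymptotics and local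
boundedness give.
-/

open MeasureTheory Real Filter Set Topology

lemma integrableOn_exp_neg_mul_mul_one_add_rpow {a u : ℝ} (ha : -1 < a) (hu : 0 < u) :
    IntegrableOn (fun t => exp (-u * t) * (1 + t ^ a)) (Ioi 0) := by
  have h := integrableOn_rpow_mul_exp_neg_mul_rpow ha one_pos hu
  simp only [rpow_one] at h
  exact ((exp_neg_integrableOn_Ioi 0 hu).add h).congr_fun
    (fun t _ => by simp only [Pi.add_apply]; ring) measurableSet_Ioi

lemma integrableOn_exp_neg_mul_mul_of_abs_le {g : ℝ → ℝ} {a u C : ℝ} (ha : -1 < a)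
    (hu : 0 < u) (hg_meas : Measurable g) (hg_le : ∀ t, 0 < t → |g t| ≤ C * (1 + t ^ a)) :
    IntegrableOn (fun t => exp (-u * t) * g t) (Ioi 0) := by
  refine ((integrableOn_exp_neg_mul_mul_one_add_rpow ha hu).const_mul C).mono'
    (by fun_prop : Measurable _).aestronglyMeasurable ?_
  filter_upwards [self_mem_ae_restrict measurableSet_Ioi] with t ht
  rw [norm_mul, norm_of_nonneg (exp_pos _).le, norm_eq_abs, mul_left_comm]
  exact mul_le_mul_of_nonneg_left (hg_le t ht) (exp_pos _).le

lemma exists_abs_le_mul_one_add_rpow {g : ℝ → ℝ} {a c : ℝ}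
    (hg_bdd : ∀ T, ∃ M, ∀ t ∈ Ioc 0 T, |g t| ≤ M)
    (hg : Tendsto (fun t => g t / t ^ a) atTop (𝓝 c)) :
    ∃ C, ∀ t, 0 < t → |g t| ≤ C * (1 + t ^ a) := by
  obtain ⟨T, hT⟩ := eventually_atTop.1 <|
    (hg.abs.eventually (gt_mem_nhds (lt_add_one |c|))).and (eventually_gt_atTop 0)
  obtain ⟨M, hM⟩ := hg_bdd T
  refine ⟨max M (|c| + 1), fun t ht => ?_⟩
  have hta : 0 < t ^ a := rpow_pos_of_pos ht a
  have hC : |c| + 1 ≤ max M (|c| + 1) := le_max_right _ _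
  rcases le_or_gt t T with htT | hTt
  · have := hM t ⟨ht, htT⟩
    nlinarith [le_max_left M (|c| + 1), abs_nonneg c]
  · have h := (hT t hTt.le).1
    rw [abs_div, abs_of_pos hta, div_lt_iff₀ hta] at h
    nlinarith [abs_nonneg c]

lemma rpow_add_one_mul_integral_exp_neg_mul (g : ℝ → ℝ) (a : ℝ) {u : ℝ} (hu : 0 < u) :
    u ^ (a + 1) * ∫ t in Ioi 0, exp (-u * t) * g t =
      ∫ x in Ioi 0, exp (-x) * (u ^ a * g (u⁻¹ * x)) := by
  have h := integral_comp_mul_left_Ioi (fun t => exp (-u * t) * g t) 0 (inv_pos.2 hu)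
  simp only [mul_zero, inv_inv, smul_eq_mul, neg_mul, mul_inv_cancel_left₀ hu.ne'] at h
  simp_rw [mul_left_comm (exp _), integral_const_mul, h, rpow_add_one hu.ne', neg_mul, mul_assoc]

theorem tendsto_rpow_mul_integral_exp_neg_mul {g : ℝ → ℝ} {a c C : ℝ} (ha : 0 ≤ a)
    (hg_meas : Measurable g) (hg_le : ∀ t, 0 < t → |g t| ≤ C * (1 + t ^ a))
    (hg : Tendsto (fun t => g t / t ^ a) atTop (𝓝 c)) :
    Tendsto (fun u => u ^ (a + 1) * ∫ t in Ioi 0, exp (-u * t) * g t) (𝓝[>] 0)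
      (𝓝 (c * Gamma (a + 1))) := by
  have hC : 0 ≤ C := by nlinarith [hg_le 1 one_pos, abs_nonneg (g 1), one_rpow a]
  have hscale : ∀ u : ℝ, 0 < u → ∀ x : ℝ, 0 < x → u ^ a * (u⁻¹ * x) ^ a = x ^ a := by
    intro u hu x hx
    rw [mul_rpow (inv_nonneg.2 hu.le) hx.le, inv_rpow hu.le, ← mul_assoc,
      mul_inv_cancel₀ (rpow_pos_of_pos hu a).ne', one_mul]
  have hGamma : c * Gamma (a + 1) = ∫ x in Ioi 0, exp (-x) * (c * x ^ a) := by
    rw [Gamma_eq_integral (by linarith), ← integral_const_mul, add_sub_cancel_right]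
    simp_rw [mul_left_comm c]
  rw [hGamma]
  refine Tendsto.congr' (eventually_nhdsWithin_of_forall fun u hu =>
    (rpow_add_one_mul_integral_exp_neg_mul g a hu).symm) ?_
  refine tendsto_integral_filter_of_dominated_convergence
    (fun x => C * (exp (-1 * x) * (1 + x ^ a))) ?_ ?_ ?_ ?_
  · exact Eventually.of_forall fun u => (by fun_prop : Measurable _).aestronglyMeasurable
  · filter_upwards [Ioc_mem_nhdsGT one_pos] with u hu
    filter_upwards [self_mem_ae_restrict measurableSet_Ioi] with x hx
    have hgx := hg_le _ (mul_pos (inv_pos.2 hu.1) hx)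
    have hua : u ^ a ≤ 1 := rpow_le_one hu.1.le hu.2 ha
    have hsc := hscale u hu.1 x hx
    rw [norm_mul, norm_of_nonneg (exp_pos _).le, norm_mul,
      norm_of_nonneg (rpow_pos_of_pos hu.1 a).le, norm_eq_abs, neg_one_mul, mul_left_comm C]
    refine mul_le_mul_of_nonneg_left ?_ (exp_pos _).le
    calc u ^ a * |g (u⁻¹ * x)| ≤ u ^ a * (C * (1 + (u⁻¹ * x) ^ a)) :=
          mul_le_mul_of_nonneg_left hgx (rpow_pos_of_pos hu.1 a).le
      _ = C * (u ^ a + x ^ a) := by rw [← hsc]; ring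
      _ ≤ C * (1 + x ^ a) := by gcongr
  · exact (integrableOn_exp_neg_mul_mul_one_add_rpow (by linarith) one_pos).const_mul C
  · filter_upwards [self_mem_ae_restrict measurableSet_Ioi] with x hx
    have h := ((hg.comp (tendsto_inv_nhdsGT_zero.atTop_mul_const hx)).const_mul (x ^ a)).const_mul
      (exp (-x))
    refine (mul_comm (x ^ a) c ▸ h).congr' (eventually_nhdsWithin_of_forall fun u hu => ?_)
    simp only [Function.comp_apply]
    rw [← hscale u hu x hx, mul_assoc,
      mul_div_cancel₀ _ (rpow_pos_of_pos (mul_pos (inv_pos.2 hu) hx) a).ne']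

lemma lintegral_Ioi_ofReal_mul_exp_neg_mul {s : ℝ} (hs : 0 < s) (T : ℝ) :
    ∫⁻ t in Ioi T, ENNReal.ofReal (s * exp (-s * t)) = ENNReal.ofReal (exp (-s * T)) := by
  rw [← ofReal_integral_eq_lintegral_ofReal ((exp_neg_integrableOn_Ioi T hs).const_mul s)
    (ae_of_all _ fun t => by positivity), integral_const_mul,
    integral_exp_mul_Ioi (neg_lt_zero.2 hs) T]
  congr 1
  field_simp

lemma setLIntegral_Ici_exp_neg_mul_eq_lintegral_measure_Ico (μ : Measure ℝ) [SFinite μ] {s : ℝ}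
    (hs : 0 < s) :
    ∫⁻ T in Ici 0, ENNReal.ofReal (exp (-s * T)) ∂μ =
      ∫⁻ t in Ioi 0, ENNReal.ofReal (s * exp (-s * t)) * μ (Ico 0 t) := by
  set f : ℝ → ENNReal := fun t => ENNReal.ofReal (s * exp (-s * t))
  have hF : Measurable (Function.uncurry fun T t => (Ioi T).indicator f t) :=
    (show Measurable ({p : ℝ × ℝ | p.1 < p.2}.indicator fun p => f p.2) from
      Measurable.indicator (by fun_prop) (measurableSet_lt measurable_fst measurable_snd))
  calc ∫⁻ T in Ici 0, ENNReal.ofReal (exp (-s * T)) ∂μ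
      = ∫⁻ T in Ici 0, (∫⁻ t in Ioi 0, (Ioi T).indicator f t) ∂μ := by
        refine setLIntegral_congr_fun measurableSet_Ici fun T hT => ?_
        rw [lintegral_indicator measurableSet_Ioi, Measure.restrict_restrict measurableSet_Ioi,
          Ioi_inter_Ioi, max_eq_left hT, lintegral_Ioi_ofReal_mul_exp_neg_mul hs]
    _ = ∫⁻ t in Ioi 0, ∫⁻ T in Ici 0, (Iio t).indicator (fun _ => f t) T ∂μ := by
        rw [lintegral_lintegral_swap hF.aemeasurable]
        simp only [indicator_apply, mem_Ioi, mem_Iio]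
    _ = ∫⁻ t in Ioi 0, f t * μ (Ico 0 t) := by
        simp_rw [lintegral_indicator_const measurableSet_Iio,
          Measure.restrict_apply measurableSet_Iio, Iio_inter_Ici]

lemma setLIntegral_Ici_exp_neg_mul_eq_ofReal_integral (μ : Measure ℝ) [IsLocallyFiniteMeasure μ]
    {s : ℝ} (hs : 0 < s)
    (hint : IntegrableOn (fun t => exp (-s * t) * (μ (Ico 0 t)).toReal) (Ioi 0)) :
    ∫⁻ T in Ici 0, ENNReal.ofReal (exp (-s * T)) ∂μ =
      ENNReal.ofReal (s * ∫ t in Ioi 0, exp (-s * t) * (μ (Ico 0 t)).toReal) := by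
  rw [setLIntegral_Ici_exp_neg_mul_eq_lintegral_measure_Ico μ hs, ← integral_const_mul,
    ofReal_integral_eq_lintegral_ofReal (hint.const_mul s) (ae_of_all _ fun t => by positivity)]
  refine setLIntegral_congr_fun measurableSet_Ioi fun t _ => ?_
  rw [← mul_assoc, ENNReal.ofReal_mul (by positivity : 0 ≤ s * exp (-s * t)),
    ENNReal.ofReal_toReal measure_Ico_lt_top.ne]

lemma monotone_toReal_measure_Ico (μ : Measure ℝ) [IsLocallyFiniteMeasure μ] (a : ℝ) :
    Monotone fun t => (μ (Ico a t)).toReal := fun _ _ h =>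
  ENNReal.toReal_mono measure_Ico_lt_top.ne (measure_mono (Ico_subset_Ico_right h))

lemma exists_abs_exp_neg_mul_toReal_measure_Ico_le (μ : Measure ℝ) [IsLocallyFiniteMeasure μ]
    {δ a c : ℝ} (hδ : 0 ≤ δ)
    (h : Tendsto (fun t => exp (-δ * t) * (μ (Ico 0 t)).toReal / t ^ a) atTop (𝓝 c)) :
    ∃ C, ∀ t, 0 < t → |exp (-δ * t) * (μ (Ico 0 t)).toReal| ≤ C * (1 + t ^ a) := by
  refine exists_abs_le_mul_one_add_rpow (fun T => ⟨(μ (Ico 0 T)).toReal, fun t ht => ?_⟩) h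
  rw [abs_of_nonneg (by positivity), ← one_mul (μ (Ico 0 T)).toReal]
  exact mul_le_mul (exp_le_one_iff.2 (by nlinarith [ht.1]))
    (monotone_toReal_measure_Ico μ 0 ht.2) ENNReal.toReal_nonneg zero_le_one

theorem tendsto_rpow_mul_setLIntegral_Ici_exp_neg_mul (μ : Measure ℝ) [IsLocallyFiniteMeasure μ]
    {δ a c : ℝ} (hδ : 0 ≤ δ) (ha : 0 ≤ a)
    (h : Tendsto (fun t => exp (-δ * t) * (μ (Ico 0 t)).toReal / t ^ a) atTop (𝓝 c)) :
    (∀ s, δ < s → ∫⁻ T in Ici 0, ENNReal.ofReal (exp (-s * T)) ∂μ < ⊤) ∧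
      Tendsto (fun s => (s - δ) ^ (a + 1) *
          (∫⁻ T in Ici 0, ENNReal.ofReal (exp (-s * T)) ∂μ).toReal)
        (𝓝[>] δ) (𝓝 (δ * (c * Gamma (a + 1)))) := by
  set g : ℝ → ℝ := fun t => exp (-δ * t) * (μ (Ico 0 t)).toReal
  have hg_meas : Measurable g := by
    have := (monotone_toReal_measure_Ico μ 0).measurable
    fun_prop
  obtain ⟨C, hC⟩ := exists_abs_exp_neg_mul_toReal_measure_Ico_le μ hδ h
  have hL : ∀ s, δ < s → ∫⁻ T in Ici 0, ENNReal.ofReal (exp (-s * T)) ∂μ =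
      ENNReal.ofReal (s * ∫ t in Ioi 0, exp (-(s - δ) * t) * g t) := fun s hs => by
    have hshift : ∀ t, exp (-(s - δ) * t) * g t = exp (-s * t) * (μ (Ico 0 t)).toReal :=
      fun t => by simp only [g, ← mul_assoc, ← exp_add]; ring_nf
    have hint := integrableOn_exp_neg_mul_mul_of_abs_le (by linarith) (sub_pos.2 hs) hg_meas hC
    simp_rw [hshift] at hint ⊢
    exact setLIntegral_Ici_exp_neg_mul_eq_ofReal_integral μ (hδ.trans_lt hs) hint
  refine ⟨fun s hs => hL s hs ▸ ENNReal.ofReal_lt_top, ?_⟩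
  have hsub : Tendsto (fun s => s - δ) (𝓝[>] δ) (𝓝[>] 0) :=
    tendsto_nhdsWithin_iff.2 ⟨((continuous_sub_right δ).tendsto' δ 0 (sub_self δ)).mono_left
      nhdsWithin_le_nhds, eventually_nhdsWithin_of_forall fun _ hs => sub_pos.2 (mem_Ioi.1 hs)⟩
  refine ((tendsto_id.mono_left nhdsWithin_le_nhds).mul
    ((tendsto_rpow_mul_integral_exp_neg_mul ha hg_meas hC h).comp hsub)).congr'
    (eventually_nhdsWithin_of_forall fun s hs => ?_)
  have hI : 0 ≤ ∫ t in Ioi 0, exp (-(s - δ) * t) * g t :=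
    setIntegral_nonneg measurableSet_Ioi fun t _ => by simp only [g]; positivity
  simp only [Function.comp_apply, id_eq]
  rw [hL s hs, ENNReal.toReal_ofReal (mul_nonneg (hδ.trans_lt hs).le hI)]
  ring

theorem laplace_transform_asymptotics_of_measure_general
    (μ : Measure ℝ) [IsLocallyFiniteMeasure μ]
    (δ : ℝ) (hδ : 0 < δ)
    (c₁ : ℝ) (hc₁ : 0 < c₁)
    (r : ℕ) (hr : 1 ≤ r)
    (hasymp : Tendsto (fun T : ℝ =>
        (μ (Set.Ico 0 T)).toReal / (c₁ * T ^ (((r : ℝ) - 1) / 2) * Real.exp (δ * T)))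
      atTop (nhds 1)) :
    (∀ s : ℝ, δ < s →
      (∫⁻ T in Set.Ici (0:ℝ), ENNReal.ofReal (Real.exp (-s * T)) ∂μ) < ⊤) ∧
    Tendsto (fun s : ℝ =>
        (∫⁻ T in Set.Ici (0:ℝ), ENNReal.ofReal (Real.exp (-s * T)) ∂μ).toReal /
          (c₁ * δ * Real.Gamma (((r : ℝ) + 1) / 2) * (s - δ) ^ (-(((r : ℝ) + 1) / 2))))
      (nhdsWithin δ (Set.Ioi δ)) (nhds 1) := by
  set a : ℝ := ((r : ℝ) - 1) / 2
  have ha : 0 ≤ a := by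
    have : (1 : ℝ) ≤ r := by exact_mod_cast hr
    simp only [a]; linarith
  rw [show ((r : ℝ) + 1) / 2 = a + 1 by simp only [a]; ring]
  have h : Tendsto (fun t => exp (-δ * t) * (μ (Ico 0 t)).toReal / t ^ a) atTop (𝓝 c₁) := by
    refine (mul_one c₁ ▸ hasymp.const_mul c₁).congr' ?_
    filter_upwards [eventually_gt_atTop 0] with t ht
    simp only [neg_mul, exp_neg]
    field_simp
  obtain ⟨hfin, hlim⟩ := tendsto_rpow_mul_setLIntegral_Ici_exp_neg_mul μ hδ.le ha h
  refine ⟨hfin, ?_⟩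
  have hΓ : 0 < Gamma (a + 1) := Gamma_pos_of_pos (by linarith)
  have hlim' := hlim.div_const (c₁ * δ * Gamma (a + 1))
  rw [show δ * (c₁ * Gamma (a + 1)) / (c₁ * δ * Gamma (a + 1)) = 1 by field_simp] at hlim'
  refine hlim'.congr' (eventually_nhdsWithin_of_forall fun s hs => ?_)
  dsimp only
  have hpow := rpow_pos_of_pos (sub_pos.2 hs) (a + 1)
  rw [rpow_neg (sub_pos.2 hs).le]
  field_simp

/-- **Abstract form of the asymptotic (eq_diverge) in Section 9 of the paper.**
Let `μ` be a locally finite Borel measure on `[0, ∞)` (modelled as a locally finite measure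
on `ℝ` vanishing on `(-∞, 0)`), let `δ > 0`, `c₁ > 0`, `r ≥ 1` an integer, and suppose
`μ([0, T)) ∼ c₁ · T^((r-1)/2) · e^{δT}` as `T → ∞`.  Then for every `s > δ` the integral
`∫ e^{-sT} dμ(T)` is finite, and
`∫ e^{-sT} dμ(T) ∼ c₁ · δ · Γ((r+1)/2) · (s - δ)^(-(r+1)/2)` as `s → δ⁺`. -/
theorem laplace_transform_asymptotics_of_measure
    (μ : Measure ℝ) [IsLocallyFiniteMeasure μ]
    (hμ_supp : μ (Set.Iio (0:ℝ)) = 0)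
    (δ : ℝ) (hδ : 0 < δ)
    (c₁ : ℝ) (hc₁ : 0 < c₁)
    (r : ℕ) (hr : 1 ≤ r)
    (hasymp : Tendsto (fun T : ℝ =>
        (μ (Set.Ico 0 T)).toReal / (c₁ * T ^ (((r : ℝ) - 1) / 2) * Real.exp (δ * T)))
      atTop (nhds 1)) :
    (∀ s : ℝ, δ < s →
      (∫⁻ T in Set.Ici (0:ℝ), ENNReal.ofReal (Real.exp (-s * T)) ∂μ) < ⊤) ∧
    Tendsto (fun s : ℝ =>
        (∫⁻ T in Set.Ici (0:ℝ), ENNReal.ofReal (Real.exp (-s * T)) ∂μ).toReal /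
          (c₁ * δ * Real.Gamma (((r : ℝ) + 1) / 2) * (s - δ) ^ (-(((r : ℝ) + 1) / 2))))
      (nhdsWithin δ (Set.Ioi δ)) (nhds 1) :=
  laplace_transform_asymptotics_of_measure_general μ δ hδ c₁ hc₁ r hr hasymp
end

section
/- Let 𝔩 be a Lie algebra over a field, and suppose 𝔩 is the internal direct sum of ideals 𝔩₁, …, 𝔩_n, 𝔩_c, where each 𝔩_i (1 ≤ i ≤ n) is a simple Lie algebra. For each i, let 𝔥_i ⊆ 𝔩_i be a Lie subalgebra that is a maximal proper subalgebra of 𝔩_i and equals its own normalizer in 𝔩_i. Let 𝔰 be a Lie subalgebra of 𝔩 containing 𝔥_i for every i. Then for every s ∈ 𝔰, writing s = s₁ + ⋯ + s_n + s_c with s_i ∈ 𝔩_i and s_c ∈ 𝔩_c, each component s_i belongs to 𝔰 and s_c belongs to 𝔰; equivalently, 𝔰 = (𝔰 ∩ (𝔩₁ ⊕ ⋯ ⊕ 𝔩_n)) + (𝔰 ∩ 𝔩_c). (Lie-algebra form of the paper's Lemma 8.2.) -/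
/-- **Lie-algebra form of the paper's Lemma 8.2.**
Let `𝔩` be a Lie algebra over a field `K` which is the internal direct sum of ideals
`𝔩₁, …, 𝔩ₙ, 𝔩_c`, where each `𝔩ᵢ` is a simple Lie algebra.  For each `i` let `𝔥ᵢ ⊆ 𝔩ᵢ` be a
Lie subalgebra which is a maximal proper subalgebra of `𝔩ᵢ` and equals its own normalizer
in `𝔩ᵢ`.  Let `𝔰` be a Lie subalgebra of `𝔩` containing every `𝔥ᵢ`.  Then for every `s ∈ 𝔰`,
writing `s = s₁ + ⋯ + sₙ + s_c` with `sᵢ ∈ 𝔩ᵢ` and `s_c ∈ 𝔩_c`, each component `sᵢ` belongs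
to `𝔰` and `s_c` belongs to `𝔰`. -/
theorem lie_subalgebra_component_mem
    {K : Type*} {L : Type*} [Field K] [LieRing L] [LieAlgebra K L]
    (n : ℕ) (I : Fin n → LieIdeal K L) (Ic : LieIdeal K L)
    (hdirect : DirectSum.IsInternal (fun j : Option (Fin n) =>
      j.elim (Ic : Submodule K L) (fun i => (I i : Submodule K L))))
    (hsimple : ∀ i, LieAlgebra.IsSimple K (I i))
    (H : Fin n → LieSubalgebra K L)
    (hHI : ∀ i, (H i : Set L) ⊆ (I i : Set L))
    (hproper : ∀ i, (H i : Set L) ≠ (I i : Set L))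
    (hmaximal : ∀ i, ∀ s : LieSubalgebra K L,
      (s : Set L) ⊆ (I i : Set L) → H i ≤ s →
      s = H i ∨ (s : Set L) = (I i : Set L))
    (hselfnorm : ∀ i, ∀ x ∈ I i, (∀ h ∈ H i, ⁅x, h⁆ ∈ H i) → x ∈ H i)
    (S : LieSubalgebra K L) (hHS : ∀ i, H i ≤ S) :
    ∀ s ∈ S, ∀ (f : Fin n → L) (c : L),
      (∀ i, f i ∈ I i) → c ∈ Ic → s = (∑ i, f i) + c →
      (∀ i, f i ∈ S) ∧ c ∈ S := by
  intro s hs f c hf hc hsum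
  set A : Option (Fin n) → Submodule K L :=
    fun j => j.elim (Ic : Submodule K L) (fun i => (I i : Submodule K L)) with hA
  have hindep := hdirect.submodule_iSupIndep
  have hdisj : ∀ a b : Option (Fin n), a ≠ b → ∀ x, x ∈ A a → x ∈ A b → x = 0 := by
    intro a b hab x hxa hxb
    exact Submodule.disjoint_def.mp (hindep.pairwiseDisjoint hab) x hxa hxb
  -- key: each component f i is in S (or compute afterwards)
  have key : ∀ i, f i ∈ S := by
    intro i
    -- brackets of s with elements of H i equal brackets of f i
    have hbr : ∀ h ∈ H i, ⁅s, h⁆ = ⁅f i, h⁆ := by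
      intro h hh
      have hhI : h ∈ I i := hHI i hh
      have hz : ∀ j : Fin n, j ≠ i → ⁅f j, h⁆ = 0 := by
        intro j hji
        refine hdisj (some j) (some i) (by simpa using hji) _ ?_ ?_
        · exact lie_mem_left K L (I j) (f j) h (hf j)
        · exact lie_mem_right K L (I i) _ h hhI
      have hcz : ⁅c, h⁆ = 0 := by
        refine hdisj none (some i) (by simp) _ ?_ ?_
        · exact lie_mem_left K L Ic c h hc
        · exact lie_mem_right K L (I i) _ h hhI
      have hsl : ⁅(∑ j : Fin n, f j), h⁆ = ∑ j : Fin n, ⁅f j, h⁆ :=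
        map_sum (AddMonoidHom.mk' (fun x : L => ⁅x, h⁆) (fun a b => add_lie a b h)) f Finset.univ
      rw [hsum, add_lie, hcz, add_zero, hsl,
        Finset.sum_eq_single i (fun j _ hj => hz j hj) (by simp)]
    -- the intermediate subalgebra
    set M : LieSubalgebra K L := S ⊓ (I i : LieSubalgebra K L) with hM
    have hMI : (M : Set L) ⊆ (I i : Set L) := by
      intro x hx
      exact hx.2
    have hHM : H i ≤ M := fun x hx => ⟨hHS i hx, hHI i hx⟩
    rcases hmaximal i M hMI hHM with hcase | hcase
    · -- M = H i : use self-normalizing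
      have : f i ∈ H i := by
        apply hselfnorm i (f i) (hf i)
        intro h hh
        have h1 : ⁅f i, h⁆ ∈ S := by
          rw [← hbr h hh]
          exact S.lie_mem hs (hHS i hh)
        have h2 : ⁅f i, h⁆ ∈ I i := lie_mem_left K L (I i) (f i) h (hf i)
        have : ⁅f i, h⁆ ∈ M := ⟨h1, h2⟩
        rwa [hcase] at this
      exact hHS i this
    · -- M = I i : f i ∈ I i ⊆ M ⊆ S
      have : f i ∈ M := by
        have : f i ∈ (I i : Set L) := hf i
        rw [← hcase] at this
        exact this
      exact this.1
  refine ⟨key, ?_⟩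
  have : c = s - ∑ i, f i := by rw [hsum]; abel
  rw [this]
  exact S.sub_mem hs (S.sum_mem fun i _ => key i)
end

section
/- Let n ≥ 2 and let H₁, H₂ be real diagonal n × n matrices with trace zero whose diagonal entries are strictly decreasing: (H_j)₁₁ > (H_j)₂₂ > ⋯ > (H_j)_{nn} for j = 1, 2. Then for every k in the special orthogonal group SO(n), trace(k H₁ k⁻¹ H₂) ≤ trace(H₁ H₂). (Instance of the paper's Lemma 3.3 for G = SL_n(ℝ), K = SO(n), with the inner product ⟨X, Y⟩ = trace(XY) on the Cartan subalgebra of traceless diagonal matrices.) -/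
open Matrix

/-- **Instance of the paper's Lemma 3.3 for `G = SLₙ(ℝ)`, `K = SO(n)`.**
Let `H₁ = diagonal d₁` and `H₂ = diagonal d₂` be real traceless diagonal `n × n` matrices
with strictly decreasing diagonal entries.  Then for every `k ∈ SO(n)` (i.e. `k * kᵀ = 1`
and `det k = 1`, so `k⁻¹ = kᵀ`), `trace (k H₁ k⁻¹ H₂) ≤ trace (H₁ H₂)`. -/
theorem trace_conj_diagonal_le
    (n : ℕ) (hn : 2 ≤ n)
    (d₁ d₂ : Fin n → ℝ)
    (htr₁ : ∑ i, d₁ i = 0) (htr₂ : ∑ i, d₂ i = 0)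
    (hd₁ : StrictAnti d₁) (hd₂ : StrictAnti d₂)
    (k : Matrix (Fin n) (Fin n) ℝ)
    (hk : k * kᵀ = 1) (hdet : k.det = 1) :
    (k * Matrix.diagonal d₁ * kᵀ * Matrix.diagonal d₂).trace
      ≤ (Matrix.diagonal d₁ * Matrix.diagonal d₂).trace := by
  have hk' : kᵀ * k = 1 := mul_eq_one_comm.mp hk
  -- the matrix of squares
  set S : Matrix (Fin n) (Fin n) ℝ := Matrix.of fun i j => (k i j) ^ 2 with hS
  have hSmem : S ∈ doublyStochastic ℝ (Fin n) := by
    rw [mem_doublyStochastic_iff_sum]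
    refine ⟨fun i j => by simp only [hS, Matrix.of_apply]; positivity, fun i => ?_, fun j => ?_⟩
    · have := congrFun (congrFun hk i) i
      simp only [hS, Matrix.of_apply, sq]
      simpa [Matrix.mul_apply, Matrix.one_apply] using this
    · have := congrFun (congrFun hk' j) j
      simp only [hS, Matrix.of_apply, sq]
      simpa [Matrix.mul_apply, Matrix.one_apply] using this
  -- rewrite both traces
  have hLHS : (k * Matrix.diagonal d₁ * kᵀ * Matrix.diagonal d₂).trace
      = ∑ i, ∑ j, S i j * (d₂ i * d₁ j) := by
    simp only [Matrix.trace, Matrix.diag, Matrix.mul_apply, Matrix.diagonal_apply,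
      Matrix.transpose_apply, hS, Matrix.of_apply]
    simp [Finset.sum_mul, Finset.mul_sum, Finset.sum_ite_eq', Finset.sum_ite_eq]
    congr 1
    ext i
    congr 1
    ext j
    ring
  have hRHS : (Matrix.diagonal d₁ * Matrix.diagonal d₂).trace = ∑ i, d₂ i * d₁ i := by
    simp [Matrix.trace, Matrix.diag, Matrix.diagonal_mul_diagonal, mul_comm]
  rw [hLHS, hRHS]
  -- Birkhoff decomposition
  obtain ⟨w, hw0, hw1, hweq⟩ := exists_eq_sum_perm_of_mem_doublyStochastic hSmem
  have hmono : Monovary d₂ d₁ := by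
    intro i j hij
    have hji : j < i := by
      by_contra h
      exact absurd hij (not_lt.mpr (hd₁.antitone (not_lt.mp h)))
    exact (hd₂ hji).le
  have hperm : ∀ σ : Equiv.Perm (Fin n),
      ∑ i, ∑ j, (σ.permMatrix ℝ) i j * (d₂ i * d₁ j) ≤ ∑ i, d₂ i * d₁ i := by
    intro σ
    have h1 : ∀ i, ∑ j, (σ.permMatrix ℝ) i j * (d₂ i * d₁ j) = d₂ i * d₁ (σ i) := by
      intro i
      simp [Equiv.Perm.permMatrix, PEquiv.toMatrix_apply, Equiv.toPEquiv_apply,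
        Finset.sum_ite_eq', Finset.sum_ite_eq]
    simp only [h1]
    exact hmono.sum_mul_comp_perm_le_sum_mul
  calc ∑ i, ∑ j, S i j * (d₂ i * d₁ j)
      = ∑ σ : Equiv.Perm (Fin n), w σ * ∑ i, ∑ j, (σ.permMatrix ℝ) i j * (d₂ i * d₁ j) := by
        have hSentry : ∀ i j, S i j = ∑ σ : Equiv.Perm (Fin n), w σ * (σ.permMatrix ℝ) i j := by
          intro i j
          rw [← hweq, Matrix.sum_apply]
          simp
        simp only [hSentry, Finset.sum_mul, Finset.mul_sum, mul_assoc]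
        have swap1 : ∀ i : Fin n,
            (∑ j, ∑ σ : Equiv.Perm (Fin n),
                w σ * (Equiv.Perm.permMatrix ℝ σ i j * (d₂ i * d₁ j)))
            = ∑ σ : Equiv.Perm (Fin n), ∑ j,
                w σ * (Equiv.Perm.permMatrix ℝ σ i j * (d₂ i * d₁ j)) :=
          fun i => Finset.sum_comm ..
        simp only [swap1]
        rw [Finset.sum_comm]
    _ ≤ ∑ σ : Equiv.Perm (Fin n), w σ * ∑ i, d₂ i * d₁ i := by
        refine Finset.sum_le_sum fun σ _ => mul_le_mul_of_nonneg_left (hperm σ) (hw0 σ)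
    _ = ∑ i, d₂ i * d₁ i := by rw [← Finset.sum_mul, hw1, one_mul]
end

section
/- Let ℍ be the hyperbolic upper half-plane with its hyperbolic distance dist, on which SL(2, ℝ) acts by Möbius transformations, and let SO(2) ⊆ SL(2, ℝ) be the stabilizer of the point i. Then for every C > 0 and every neighborhood U of the identity matrix in SO(2), there exists ε > 0 such that for all real t ≥ C and all k ∈ SO(2): if dist(k • (e^t · i), e^t · i) < ε, then k ∈ U ∪ (−U), i.e., k ∈ MU where M = {I, −I}. (Instance of the paper's Proposition 3.4 for G = SL(2, ℝ).) -/
/-!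
For `k = !![a, b; -b, a]` in `SO(2)` and `z ∈ ℍ` one computes
`sinh (dist (k • z) z / 2) = |b| * ‖1 + z ^ 2‖ / (2 * im z)`, which at `z = e^t i` equals
`|b| * sinh t ≥ |b| * sinh C`. So a small displacement forces `|b|` to be small. Then
`a = ±√(1 - b ^ 2)`, and `±k` is the value at `b` of the continuous curve
`s ↦ !![√(1 - s ^ 2), s; -s, √(1 - s ^ 2)]` through `1`, hence lies in `U` for `|b|` small.
-/

open scoped MatrixGroups
open Matrix Filter

def rotationMatrices : Set (Matrix (Fin 2) (Fin 2) ℝ) := {g | gᵀ * g = 1 ∧ g.det = 1}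

section rotationMatrices

variable {g : Matrix (Fin 2) (Fin 2) ℝ}

lemma entries_of_mem_rotationMatrices (hg : g ∈ rotationMatrices) :
    g 1 0 = -g 0 1 ∧ g 1 1 = g 0 0 ∧ g 0 0 ^ 2 + g 0 1 ^ 2 = 1 := by
  obtain ⟨horth, hdet⟩ := hg
  have h00 := congr_fun₂ horth 0 0
  have h01 := congr_fun₂ horth 0 1
  have h11 := congr_fun₂ horth 1 1
  simp only [mul_apply, Fin.sum_univ_two, transpose_apply, one_apply_eq,
    one_apply_ne (by decide : (0 : Fin 2) ≠ 1)] at h00 h01 h11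
  rw [det_fin_two] at hdet
  have h10 : g 1 0 = -g 0 1 := by
    linear_combination (-g 1 0) * h11 - g 0 1 * hdet + g 1 1 * h01
  refine ⟨h10, ?_, ?_⟩
  · linear_combination g 0 0 * hdet + g 1 0 * h01 - g 1 1 * h00
  · linear_combination h00 + (g 0 1 - g 1 0) * h10

lemma neg_mem_rotationMatrices (hg : g ∈ rotationMatrices) : -g ∈ rotationMatrices := by
  obtain ⟨horth, hdet⟩ := hg
  refine ⟨by rwa [transpose_neg, neg_mul_neg], ?_⟩
  simp [det_neg, hdet]

noncomputable def rotationOfSin (s : ℝ) : Matrix (Fin 2) (Fin 2) ℝ :=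
  !![√(1 - s ^ 2), s; -s, √(1 - s ^ 2)]

lemma continuous_rotationOfSin : Continuous rotationOfSin := by
  refine continuous_matrix fun i j => ?_
  fin_cases i <;> fin_cases j <;> simp [rotationOfSin] <;> fun_prop

lemma rotationOfSin_zero : rotationOfSin 0 = 1 := by
  ext i j
  fin_cases i <;> fin_cases j <;> simp [rotationOfSin]

lemma eq_rotationOfSin_of_mem_rotationMatrices (hg : g ∈ rotationMatrices) (hpos : 0 ≤ g 0 0) :
    g = rotationOfSin (g 0 1) := by
  obtain ⟨h10, h11, hsq⟩ := entries_of_mem_rotationMatrices hg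
  have hcos : √(1 - g 0 1 ^ 2) = g 0 0 := by
    rw [← hsq, add_sub_cancel_right, Real.sqrt_sq hpos]
  ext i j
  fin_cases i <;> fin_cases j <;> simp [rotationOfSin, hcos, h10, h11]

lemma exists_abs_lt_imp_mem_or_neg_mem {U : Set (Matrix (Fin 2) (Fin 2) ℝ)}
    (hU : U ∈ nhdsWithin 1 rotationMatrices) :
    ∃ δ > 0, ∀ g ∈ rotationMatrices, |g 0 1| < δ → g ∈ U ∨ -g ∈ U := by
  obtain ⟨V, hV, hVU⟩ := mem_nhdsWithin_iff_exists_mem_nhds_inter.mp hU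
  have hrot : ∀ᶠ s in nhds 0, rotationOfSin s ∈ V := by
    refine continuous_rotationOfSin.continuousAt.preimage_mem_nhds ?_
    rwa [rotationOfSin_zero]
  obtain ⟨β, hβ, hβV⟩ := Metric.eventually_nhds_iff.mp hrot
  refine ⟨min β 1, lt_min hβ one_pos, fun g hg hsmall => ?_⟩
  have hsin : |g 0 1| < β := hsmall.trans_le (min_le_left _ _)
  have hcos : g 0 0 ≠ 0 := by
    intro h0
    have := (entries_of_mem_rotationMatrices hg).2.2
    nlinarith [abs_lt.mp (hsmall.trans_le (min_le_right _ _))]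
  rcases hcos.lt_or_gt with hneg | hpos
  · refine .inr (hVU ⟨?_, neg_mem_rotationMatrices hg⟩)
    rw [eq_rotationOfSin_of_mem_rotationMatrices (neg_mem_rotationMatrices hg)
      (by simp [hneg.le])]
    exact hβV (by simpa [Real.dist_eq] using hsin)
  · refine .inl (hVU ⟨?_, hg⟩)
    rw [eq_rotationOfSin_of_mem_rotationMatrices hg hpos.le]
    exact hβV (by simpa [Real.dist_eq] using hsin)

end rotationMatrices

open UpperHalfPlane in
lemma sinh_half_dist_smul_self (k : SL(2, ℝ))
    (hk : (k : Matrix (Fin 2) (Fin 2) ℝ) ∈ rotationMatrices) (z : ℍ) :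
    Real.sinh (dist (k • z) z / 2) = |k 0 1| * ‖1 + (z : ℂ) ^ 2‖ / (2 * z.im) := by
  obtain ⟨h10, h11, -⟩ := entries_of_mem_rotationMatrices hk
  have hdenom : denom (Matrix.SpecialLinearGroup.mapGL ℝ k) z = k 0 0 - k 0 1 * z := by
    simp only [denom, SpecialLinearGroup.mapGL_coe_matrix, Algebra.algebraMap_self,
      SpecialLinearGroup.map_apply_coe, RingHom.mapMatrix_id, RingHom.id_apply, h10, h11,
      Complex.ofReal_neg]
    ring
  have hD := denom_ne_zero (Matrix.SpecialLinearGroup.mapGL ℝ k) z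
  rw [hdenom] at hD
  have hkz : ((k • z : ℍ) : ℂ) = (k 0 0 * z + k 0 1) / (k 0 0 - k 0 1 * z) := by
    rw [coe_specialLinearGroup_apply]
    simp only [Algebra.algebraMap_self_apply, h10, h11]
    push_cast
    ring
  have him : (k • z).im = z.im / Complex.normSq (k 0 0 - k 0 1 * z) := by
    rw [← hdenom, MulAction.compHom_smul_def, im_smul_eq_div_normSq]
    simp
  have hdiff : ((k • z : ℍ) : ℂ) - z = k 0 1 * (1 + (z : ℂ) ^ 2) / (k 0 0 - k 0 1 * z) := by
    rw [hkz, div_sub' hD]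
    ring
  have hsqrt : √((k • z).im * z.im) = z.im / ‖(k 0 0 - k 0 1 * z : ℂ)‖ := by
    rw [him, ← Real.sqrt_sq (by positivity : 0 ≤ z.im / ‖(k 0 0 - k 0 1 * z : ℂ)‖),
      div_pow, Complex.sq_norm]
    ring_nf
  rw [sinh_half_dist, Complex.dist_eq, hdiff, hsqrt, norm_div, norm_mul, Complex.norm_real,
    Real.norm_eq_abs, mul_div_assoc', div_div_div_cancel_right₀ (norm_ne_zero_iff.mpr hD)]

lemma norm_one_add_sq_div_two_mul_im_of_eq_exp {t : ℝ} {z : UpperHalfPlane}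
    (hz : z = ⟨⟨0, Real.exp t⟩, Real.exp_pos t⟩) :
    ‖1 + (z : ℂ) ^ 2‖ / (2 * z.im) = |Real.sinh t| := by
  have hsq : 1 + (z : ℂ) ^ 2 = ((1 - Real.exp t ^ 2 : ℝ) : ℂ) := by
    apply Complex.ext <;> simp [hz, sq, sub_eq_add_neg, -Complex.ofReal_exp]
  have him : z.im = Real.exp t := by rw [hz]; rfl
  rw [hsq, him, Complex.norm_real, Real.norm_eq_abs,
    ← abs_of_pos (by positivity : 0 < 2 * Real.exp t), ← abs_div, ← abs_neg, Real.sinh_eq,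
    Real.exp_neg]
  congr 1
  field_simp
  ring

theorem rotation_near_identity_of_small_displacement_general
    (C : ℝ) (hC : 0 < C)
    (U : Set (Matrix (Fin 2) (Fin 2) ℝ))
    (hU_nhds : U ∈ nhdsWithin (1 : Matrix (Fin 2) (Fin 2) ℝ)
      {g : Matrix (Fin 2) (Fin 2) ℝ | gᵀ * g = 1 ∧ g.det = 1}) :
    ∃ ε > (0:ℝ), ∀ t : ℝ, C ≤ t → ∀ k : SL(2, ℝ),
      (↑k : Matrix (Fin 2) (Fin 2) ℝ)ᵀ * (↑k : Matrix (Fin 2) (Fin 2) ℝ) = 1 →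
      ∀ z : UpperHalfPlane, z = ⟨⟨0, Real.exp t⟩, Real.exp_pos t⟩ →
      dist (k • z) z < ε →
      ((↑k : Matrix (Fin 2) (Fin 2) ℝ) ∈ U ∨
        -(↑k : Matrix (Fin 2) (Fin 2) ℝ) ∈ U) := by
  obtain ⟨δ, hδ, hδU⟩ := exists_abs_lt_imp_mem_or_neg_mem hU_nhds
  have hsinhC : 0 < Real.sinh C := Real.sinh_pos_iff.mpr hC
  refine ⟨2 * Real.arsinh (δ * Real.sinh C),
    mul_pos two_pos (Real.arsinh_pos_iff.mpr (mul_pos hδ hsinhC)), ?_⟩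
  intro t hCt k hk z hz hdist
  have hsinht : 0 < Real.sinh t := Real.sinh_pos_iff.mpr (hC.trans_le hCt)
  refine hδU _ ⟨hk, k.2⟩ (lt_of_mul_lt_mul_right ?_ hsinht.le)
  calc |k 0 1| * Real.sinh t
      = Real.sinh (dist (k • z) z / 2) := by
        rw [sinh_half_dist_smul_self k ⟨hk, k.2⟩, mul_div_assoc,
          norm_one_add_sq_div_two_mul_im_of_eq_exp hz, abs_of_pos hsinht]
    _ < δ * Real.sinh C := by
        rw [← Real.sinh_arsinh (δ * Real.sinh C), Real.sinh_lt_sinh]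
        linarith
    _ ≤ δ * Real.sinh t := by gcongr; exact Real.sinh_le_sinh.mpr hCt

/-- **Instance of the paper's Proposition 3.4 for `G = SL(2, ℝ)`.**
Let `ℍ` be the hyperbolic upper half-plane with hyperbolic distance `dist`, on which
`SL(2, ℝ)` acts by Möbius transformations, and identify `SO(2)` with the set of matrices `g`
with `gᵀ * g = 1` and `det g = 1` (the stabilizer of `i`).  For every `C > 0` and every
neighborhood `U` of the identity matrix within `SO(2)`, there exists `ε > 0` such that for
all `t ≥ C` and all `k ∈ SO(2) ⊆ SL(2, ℝ)`: if `dist (k • (e^t · i)) (e^t · i) < ε`, then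
`k ∈ U ∪ (-U)`, i.e. `k ∈ MU` with `M = {I, -I}`. -/
theorem rotation_near_identity_of_small_displacement
    (C : ℝ) (hC : 0 < C)
    (U : Set (Matrix (Fin 2) (Fin 2) ℝ))
    (hU_sub : U ⊆ {g : Matrix (Fin 2) (Fin 2) ℝ | gᵀ * g = 1 ∧ g.det = 1})
    (hU_nhds : U ∈ nhdsWithin (1 : Matrix (Fin 2) (Fin 2) ℝ)
      {g : Matrix (Fin 2) (Fin 2) ℝ | gᵀ * g = 1 ∧ g.det = 1}) :
    ∃ ε > (0:ℝ), ∀ t : ℝ, C ≤ t → ∀ k : SL(2, ℝ),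
      (↑k : Matrix (Fin 2) (Fin 2) ℝ)ᵀ * (↑k : Matrix (Fin 2) (Fin 2) ℝ) = 1 →
      ∀ z : UpperHalfPlane, z = ⟨⟨0, Real.exp t⟩, Real.exp_pos t⟩ →
      dist (k • z) z < ε →
      ((↑k : Matrix (Fin 2) (Fin 2) ℝ) ∈ U ∨
        -(↑k : Matrix (Fin 2) (Fin 2) ℝ) ∈ U) :=
  rotation_near_identity_of_small_displacement_general C hC U hU_nhds
end

section
/- Let ℍ be the hyperbolic upper half-plane with its hyperbolic distance dist, on which SL(2, ℝ) acts by Möbius transformations, and let SO(2) ⊆ SL(2, ℝ) be the stabilizer of the point i. Then for all real s, t > 0 and every k ∈ SO(2), dist(e^s · i, e^t · i) ≤ dist(k • (e^s · i), e^t · i). That is, rotating a point of the positive imaginary axis about i never decreases its distance to another point of the same geodesic ray. (Instance of the paper's Lemma 3.2 for G = SL(2, ℝ).) -/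
/-!
Rotations `k ∈ SO(2)` fix `i`, and `y ↦ e^y · i` is an isometric parametrisation of the
imaginary axis. Hence `k • (e^s · i)` is still at distance `s` from `i`, while `e^t · i` is at
distance `t`, so the reverse triangle inequality through `i` gives
`dist (k • (e^s · i)) (e^t · i) ≥ |s - t| = dist (e^s · i) (e^t · i)`.
-/

open scoped MatrixGroups
open Matrix UpperHalfPlane

theorem dist_le_dist_smul_of_smul_eq {M X : Type*} [PseudoMetricSpace X] [SMul M X]
    [IsIsometricSMul M X] {g : M} {p x y : X} (hp : g • p = p)
    (hxy : dist x y = |dist x p - dist y p|) : dist x y ≤ dist (g • x) y :=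
  calc dist x y = |dist (g • x) (g • p) - dist y p| := by rw [hxy, dist_smul]
    _ = |dist (g • x) p - dist y p| := by rw [hp]
    _ ≤ dist (g • x) y := abs_dist_sub_le _ _ _

theorem UpperHalfPlane.smul_I_eq_I_of_transpose_mul_self_eq_one (k : SL(2, ℝ))
    (hk : (k : Matrix (Fin 2) (Fin 2) ℝ)ᵀ * k = 1) : k • I = I := by
  have h00 := congrFun₂ hk 0 0
  have h01 := congrFun₂ hk 0 1
  simp only [mul_apply, Fin.sum_univ_two, transpose_apply, one_apply_eq,
    one_apply_ne (by decide : (0 : Fin 2) ≠ 1)] at h00 h01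
  have hdet : k 0 0 * k 1 1 - k 0 1 * k 1 0 = 1 := by
    rw [← det_fin_two]; exact k.det_coe
  change (k : GL (Fin 2) ℝ) • I = I
  rw [gl_smul_I_eq_I_iff_of_pos (by simp)]
  simp only [SpecialLinearGroup.coe_GL_coe_matrix]
  constructor
  · linear_combination k 1 1 * h00 - k 0 0 * hdet - k 1 0 * h01
  · linear_combination k 0 0 * h01 - k 0 1 * h00 - k 1 0 * hdet

/-- **Instance of the paper's Lemma 3.2 for `G = SL(2, ℝ)`.**
Let `ℍ` be the hyperbolic upper half-plane with hyperbolic distance `dist`, on which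
`SL(2, ℝ)` acts by Möbius transformations, and identify `SO(2)` (the stabilizer of `i`) with
the set of `k ∈ SL(2, ℝ)` with `kᵀ * k = 1`.  Then for all `s, t > 0` and every
`k ∈ SO(2)`, `dist (e^s · i) (e^t · i) ≤ dist (k • (e^s · i)) (e^t · i)`: rotating a point of
the positive imaginary axis about `i` never decreases its distance to another point of the
same geodesic ray. -/
theorem dist_imaginary_axis_le_dist_rotated
    (s t : ℝ) (hs : 0 < s) (ht : 0 < t)
    (k : SL(2, ℝ))
    (hk : (↑k : Matrix (Fin 2) (Fin 2) ℝ)ᵀ * (↑k : Matrix (Fin 2) (Fin 2) ℝ) = 1) :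
    ∀ zs zt : UpperHalfPlane,
      zs = ⟨⟨0, Real.exp s⟩, Real.exp_pos s⟩ →
      zt = ⟨⟨0, Real.exp t⟩, Real.exp_pos t⟩ →
      dist zs zt ≤ dist (k • zs) zt := by
  rintro _ _ rfl rfl
  have hγ := isometry_vertical_line 0
  have hI : mk ⟨0, Real.exp 0⟩ (Real.exp_pos 0) = I :=
    UpperHalfPlane.ext (Complex.ext (by simp) (by simp))
  refine dist_le_dist_smul_of_smul_eq (smul_I_eq_I_of_transpose_mul_self_eq_one k hk) ?_
  rw [← hI, hγ.dist_eq, hγ.dist_eq, hγ.dist_eq]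
  simp only [Real.dist_eq, sub_zero, abs_of_pos hs, abs_of_pos ht]
end
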